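/- arXiv:1906.01056 — 3 statements merged into one kernel-verified Lean document; each statement's English description precedes it below -/
import Mathlib

section
/- Let G be an arbitrary graph and {u,v} a two-pair of G. Then G + {u,v} is weakly chordal if and only if G is weakly chordal. -/
open SimpleGraph

/-- `G` has an induced (chordless) cycle of length `n`. -/
def HasInducedCycle {V : Type*} (G : SimpleGraph V) (n : ℕ) : Prop :=
  Nonempty (SimpleGraph.cycleGraph n ↪g G)

/-- `G` is chordal: it has no induced cycle of length 4 or more. -/
def Chordal {V : Type*} (G : SimpleGraph V) : Prop :=
  ∀ n, 4 ≤ n → ¬ HasInducedCycle G n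

/-- `G` is weakly chordal: neither `G` nor its complement has an induced cycle
of length 5 or more. -/
def WeaklyChordal {V : Type*} (G : SimpleGraph V) : Prop :=
  (∀ n, 5 ≤ n → ¬ HasInducedCycle G n) ∧ (∀ n, 5 ≤ n → ¬ HasInducedCycle Gᶜ n)

/-- `G` has an induced (chordless) path of length `ℓ` (i.e. with `ℓ` edges)
from `u` to `v`. -/
def HasInducedPath {V : Type*} (G : SimpleGraph V) (u v : V) (ℓ : ℕ) : Prop :=
  ∃ f : SimpleGraph.pathGraph (ℓ + 1) ↪g G, f 0 = u ∧ f (Fin.last ℓ) = v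

/-- `{u, v}` is a two-pair of `G`: `u` and `v` are distinct, non-adjacent, and
every induced path between them has exactly two edges. -/
def TwoPair {V : Type*} (G : SimpleGraph V) (u v : V) : Prop :=
  u ≠ v ∧ ¬ G.Adj u v ∧ ∀ ℓ, HasInducedPath G u v ℓ → ℓ = 2

/-!
Adding the edge `uv` changes neither the holes nor the antiholes that avoid `u` or `v`, so it
suffices to rule out those of length at least five through both `u` and `v`. A hole of `G` through
`u` and `v` splits into two induced `u`–`v` paths of lengths adding up to its length, so it is a
`C₄`. An antihole of `G` through `u` and `v` has them consecutive, and the antihole contains an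
induced `u`–`v` path of `G` with three edges. A hole of `G + uv` using the edge `uv` loses it to
become an induced `u`–`v` path of `G` with at least three edges. Finally, an antihole of `G + uv`
through `u` and `v` becomes in `Gᶜ` a cycle with the chord `uv`; both cycles cut off by the chord
are holes of `Gᶜ`, which forces length 5 or 6, and there an induced `u`–`v` path of `G` with three
or four edges can be read off.
-/

section

variable {V W : Type*}

lemma Fin.val_sub_add_val_sub {n : ℕ} {a b : Fin n} (h : a ≠ b) :
    (b - a).val + (a - b).val = n := by
  rcases lt_or_gt_of_ne (Fin.val_ne_of_ne h) with hab | hab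
  · rw [Fin.coe_sub_iff_le.mpr hab.le, Fin.coe_sub_iff_lt.mpr hab]
    omega
  · rw [Fin.coe_sub_iff_lt.mpr hab, Fin.coe_sub_iff_le.mpr hab.le]
    omega

namespace SimpleGraph

section Edge

variable {G : SimpleGraph V} {u v : V}

lemma sup_edge_adj_of_ne {x y : V} (h : s(x, y) ≠ s(u, v)) :
    (G ⊔ edge u v).Adj x y ↔ G.Adj x y := by
  simp [adj_edge, Ne.symm h]

lemma sup_edge_sdiff_edge (h : ¬G.Adj u v) : (G ⊔ edge u v) \ edge u v = G := by
  rw [sup_sdiff_right_self, sdiff_edge _ h]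

lemma compl_sup_edge_sup_edge (huv : u ≠ v) (h : ¬G.Adj u v) :
    (G ⊔ edge u v)ᶜ ⊔ edge u v = Gᶜ := by
  rw [compl_sup, sup_inf_right, compl_sup_eq_top, inf_top_eq, sup_eq_left, edge_le_iff]
  exact Or.inr ((compl_adj G u v).mpr ⟨huv, h⟩)

end Edge

namespace Embedding

variable {G : SimpleGraph V} {H : SimpleGraph W} {a b : V} {x y : W}

def supEdge (f : G ↪g H) (ha : f a = x) (hb : f b = y) : G ⊔ edge a b ↪g H ⊔ edge x y where
  toEmbedding := f.toEmbedding
  map_rel_iff' := by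
    subst ha hb
    simp [edge_adj, f.injective.eq_iff]

def sdiffEdge (f : G ↪g H) (ha : f a = x) (hb : f b = y) : G \ edge a b ↪g H \ edge x y where
  toEmbedding := f.toEmbedding
  map_rel_iff' := by
    subst ha hb
    simp [edge_adj, f.injective.eq_iff]

end Embedding

def pathGraph.reverse (n : ℕ) : pathGraph n ≃g pathGraph n where
  toEquiv := Fin.revPerm
  map_rel_iff' := by
    intro i j
    simp only [Fin.revPerm_apply, pathGraph_adj, Fin.val_rev]
    omega

lemma cycleGraph_adj_iff_val {n : ℕ} (hn : 2 ≤ n) {i j : Fin n} :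
    (cycleGraph n).Adj i j ↔ i.val + 1 = j.val ∨ j.val + 1 = i.val ∨
      (i.val + 1 = n ∧ j.val = 0) ∨ (j.val + 1 = n ∧ i.val = 0) := by
  have key : ∀ a b : ℕ, a < n → b < n →
      ((n - b + a) % n = 1 ↔ b + 1 = a ∨ (a = 0 ∧ b + 1 = n)) := by
    intro a b ha hb
    rcases lt_or_ge (n - b + a) n with h | h
    · rw [Nat.mod_eq_of_lt h]; omega
    · rw [Nat.mod_eq_sub_mod h, Nat.mod_eq_of_lt (by omega)]; omega
  rw [cycleGraph_adj', Fin.sub_def, Fin.sub_def, key _ _ j.isLt i.isLt, key _ _ i.isLt j.isLt]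
  omega

def cycleGraph.addLeft {n : ℕ} [NeZero n] (a : Fin n) : cycleGraph n ≃g cycleGraph n where
  toEquiv := Equiv.addLeft a
  map_rel_iff' := by
    intro x y
    simp only [Equiv.coe_addLeft, cycleGraph_adj', add_sub_add_left_eq_sub]

def cycleGraph.subLeft {n : ℕ} [NeZero n] (a : Fin n) : cycleGraph n ≃g cycleGraph n where
  toEquiv := Equiv.subLeft a
  map_rel_iff' := by
    intro x y
    simp only [Equiv.subLeft_apply, cycleGraph_adj', sub_sub_sub_cancel_left, or_comm]

namespace Embedding

variable {H : SimpleGraph W}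

lemma exists_cycleGraph_zero_last {m : ℕ} (f : cycleGraph (m + 2) ↪g H) {a b : Fin (m + 2)}
    (hab : (cycleGraph (m + 2)).Adj a b) :
    ∃ g : cycleGraph (m + 2) ↪g H, g 0 = f a ∧ g (Fin.last (m + 1)) = f b := by
  have hlast : Fin.last (m + 1) = -1 := by rw [← Fin.neg_last, neg_neg]
  rcases cycleGraph_adj.mp hab with h | h
  · refine ⟨f.comp (cycleGraph.addLeft a).toEmbedding, by simp [cycleGraph.addLeft], ?_⟩
    simp [cycleGraph.addLeft, hlast, ← h]
  · refine ⟨f.comp (cycleGraph.subLeft a).toEmbedding, by simp [cycleGraph.subLeft], ?_⟩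
    simp [cycleGraph.subLeft, hlast, ← h]

lemma exists_cycleGraph_sup_edge {n : ℕ} [NeZero n] (f : cycleGraph n ↪g H) {a b : Fin n}
    {x y : W} (ha : f a = x) (hb : f b = y) :
    ∃ g : cycleGraph n ⊔ edge 0 (b - a) ↪g H ⊔ edge x y, g 0 = x ∧ g (b - a) = y := by
  have ha' : (f.comp (cycleGraph.addLeft a).toEmbedding) 0 = x := by
    simpa [cycleGraph.addLeft] using ha
  have hb' : (f.comp (cycleGraph.addLeft a).toEmbedding) (b - a) = y := by
    simpa [cycleGraph.addLeft] using hb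
  exact ⟨(f.comp (cycleGraph.addLeft a).toEmbedding).supEdge ha' hb', ha', hb'⟩

end Embedding

end SimpleGraph

lemma hasInducedPath_of_adj_iff {G : SimpleGraph V} {ℓ : ℕ} (p : Fin (ℓ + 1) → V)
    (hp : p.Injective) (hadj : ∀ i j, G.Adj (p i) (p j) ↔ (pathGraph (ℓ + 1)).Adj i j) :
    HasInducedPath G (p 0) (p (Fin.last ℓ)) ℓ :=
  ⟨⟨⟨p, hp⟩, hadj _ _⟩, rfl, rfl⟩

lemma HasInducedPath.map {G : SimpleGraph V} {H : SimpleGraph W} (f : G ↪g H) {a b : V} {ℓ : ℕ}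
    (h : HasInducedPath G a b ℓ) : HasInducedPath H (f a) (f b) ℓ :=
  let ⟨p, h0, hl⟩ := h
  ⟨f.comp p, by simp [h0], by simp [hl]⟩

lemma HasInducedPath.symm {G : SimpleGraph V} {a b : V} {ℓ : ℕ} (h : HasInducedPath G a b ℓ) :
    HasInducedPath G b a ℓ :=
  let ⟨p, h0, hl⟩ := h
  ⟨p.comp (pathGraph.reverse _).toEmbedding, by simpa [pathGraph.reverse] using hl,
    by simpa [pathGraph.reverse] using h0⟩

lemma HasInducedCycle.map {G : SimpleGraph V} {H : SimpleGraph W} (f : G ↪g H) {n : ℕ}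
    (h : HasInducedCycle G n) : HasInducedCycle H n :=
  let ⟨p⟩ := h
  ⟨f.comp p⟩

lemma TwoPair.symm {G : SimpleGraph V} {u v : V} (h : TwoPair G u v) : TwoPair G v u :=
  ⟨h.1.symm, fun huv => h.2.1 huv.symm, fun ℓ hp => h.2.2 ℓ hp.symm⟩

namespace SimpleGraph

lemma hasInducedPath_cycleGraph {n : ℕ} (a b : Fin n) (h : (b - a).val + 2 ≤ n) :
    HasInducedPath (cycleGraph n) a b (b - a).val := by
  have : NeZero n := ⟨by omega⟩
  have hk : (b - a).val + 1 ≤ n := by omega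
  have base := hasInducedPath_of_adj_iff (G := cycleGraph n)
    (Fin.castLE hk) (Fin.castLE_injective hk)
    (fun i j => by
      rw [cycleGraph_adj_iff_val (by omega), pathGraph_adj]
      simp only [Fin.val_castLE]
      omega)
  have h0 : Fin.castLE hk (0 : Fin ((b - a).val + 1)) = (0 : Fin n) := Fin.ext (by simp)
  have hl : Fin.castLE hk (Fin.last (b - a).val) = b - a := Fin.ext (by simp)
  rw [h0, hl] at base
  simpa [cycleGraph.addLeft] using base.map (cycleGraph.addLeft a).toEmbedding

lemma hasInducedPath_cycleGraph_sdiff_edge {m : ℕ} (hm : 1 ≤ m) :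
    HasInducedPath (cycleGraph (m + 2) \ edge 0 (Fin.last (m + 1))) 0 (Fin.last (m + 1)) (m + 1) :=
  hasInducedPath_of_adj_iff id Function.injective_id fun i j => by
    rw [id, id, sdiff_adj, edge_adj, cycleGraph_adj_iff_val (by omega), pathGraph_adj]
    simp only [Fin.ext_iff, Fin.val_zero, Fin.val_last]
    omega

lemma hasInducedPath_compl_cycleGraph {m : ℕ} (hm : 3 ≤ m) :
    HasInducedPath (cycleGraph (m + 2))ᶜ 0 (Fin.last (m + 1)) 3 := by
  refine hasInducedPath_of_adj_iff ![0, ⟨m, by omega⟩, 1, Fin.last (m + 1)] ?_ ?_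
  · intro i j hij
    fin_cases i <;> fin_cases j <;> simp_all [Fin.ext_iff] <;> omega
  · intro i j
    fin_cases i <;> fin_cases j <;>
      simp [compl_adj, cycleGraph_adj_iff_val, pathGraph_adj, Fin.ext_iff] <;> omega

lemma hasInducedCycle_cycleGraph_sup_edge {n : ℕ} [NeZero n] {c : Fin n} (hc : 2 ≤ c.val)
    (hcn : c.val + 2 ≤ n) : HasInducedCycle (cycleGraph n ⊔ edge 0 c) (c.val + 1) := by
  have hk : c.val + 1 ≤ n := by omega
  refine ⟨⟨⟨Fin.castLE hk, Fin.castLE_injective hk⟩, fun {i j} => ?_⟩⟩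
  simp only [Function.Embedding.coeFn_mk, sup_adj, edge_adj,
    cycleGraph_adj_iff_val (n := n) (by omega), cycleGraph_adj_iff_val (n := c.val + 1) (by omega),
    ne_eq, Fin.ext_iff, Fin.val_castLE, Fin.val_zero]
  omega

lemma hasInducedPath_compl_cycleGraph_five_sup_edge_two :
    HasInducedPath (cycleGraph 5 ⊔ edge 0 2)ᶜ 0 2 4 :=
  hasInducedPath_of_adj_iff ![0, 3, 1, 4, 2] (by decide)
    (by simp only [pathGraph_adj, compl_adj, sup_adj, edge_adj]; decide)

lemma hasInducedPath_compl_cycleGraph_five_sup_edge_three :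
    HasInducedPath (cycleGraph 5 ⊔ edge 0 3)ᶜ 0 3 4 :=
  hasInducedPath_of_adj_iff ![0, 2, 4, 1, 3] (by decide)
    (by simp only [pathGraph_adj, compl_adj, sup_adj, edge_adj]; decide)

lemma hasInducedPath_compl_cycleGraph_six_sup_edge_three :
    HasInducedPath (cycleGraph 6 ⊔ edge 0 3)ᶜ 0 3 3 :=
  hasInducedPath_of_adj_iff ![0, 2, 5, 3] (by decide)
    (by simp only [pathGraph_adj, compl_adj, sup_adj, edge_adj]; decide)

lemma exists_hasInducedPath_compl_cycleGraph_sup_edge {n : ℕ} [NeZero n] {c : Fin n}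
    (hn : 5 ≤ n) (hc : 2 ≤ c.val) (hc₃ : c.val ≤ 3) (hcn : n ≤ c.val + 3) :
    ∃ ℓ ≠ 2, HasInducedPath (cycleGraph n ⊔ edge 0 c)ᶜ 0 c ℓ := by
  obtain rfl | rfl : n = 5 ∨ n = 6 := by omega
  · obtain rfl | rfl : c = 2 ∨ c = 3 := by omega
    · exact ⟨4, by decide, hasInducedPath_compl_cycleGraph_five_sup_edge_two⟩
    · exact ⟨4, by decide, hasInducedPath_compl_cycleGraph_five_sup_edge_three⟩
  · obtain rfl : c = 3 := by omega
    exact ⟨3, by decide, hasInducedPath_compl_cycleGraph_six_sup_edge_three⟩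

end SimpleGraph

lemma not_hasInducedCycle_of_adj_iff {H H' : SimpleGraph V} {u v : V} {n : ℕ}
    (hHH' : ∀ x y, s(x, y) ≠ s(u, v) → (H.Adj x y ↔ H'.Adj x y))
    (huv : ∀ f : cycleGraph n ↪g H', u ∈ Set.range f → v ∉ Set.range f)
    (hH : ¬HasInducedCycle H n) : ¬HasInducedCycle H' n := by
  rintro ⟨f⟩
  refine hH ⟨⟨f.toEmbedding, fun {i j} => ?_⟩⟩
  have mem_range {w : V} (hw : w ∈ s(f i, f j)) : w ∈ Set.range f :=
    (Sym2.mem_iff.mp hw).elim (fun e => ⟨i, e.symm⟩) (fun e => ⟨j, e.symm⟩)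
  have hij : s(f i, f j) ≠ s(u, v) := fun he =>
    huv f (mem_range (he ▸ Sym2.mem_mk_left u v)) (mem_range (he ▸ Sym2.mem_mk_right u v))
  exact (hHH' _ _ hij).trans f.map_rel_iff

namespace TwoPair

variable {G : SimpleGraph V} {u v : V} {n : ℕ}

lemma notMem_range_cycleGraph_embedding (h : TwoPair G u v) (hn : n ≠ 4)
    (f : cycleGraph n ↪g G) (hu : u ∈ Set.range f) : v ∉ Set.range f := by
  obtain ⟨a, rfl⟩ := hu
  rintro ⟨b, rfl⟩
  have hnadj : ¬(cycleGraph n).Adj a b := fun hadj => h.2.1 (f.map_rel_iff.mpr hadj)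
  rw [cycleGraph_adj'] at hnadj
  have hsum := Fin.val_sub_add_val_sub fun hab : a = b => h.1 (congrArg f hab)
  have := (a - b).isLt
  have := (b - a).isLt
  have h₁ := h.2.2 _ ((hasInducedPath_cycleGraph a b (by omega)).map f)
  have h₂ := h.symm.2.2 _ ((hasInducedPath_cycleGraph b a (by omega)).map f)
  omega

lemma notMem_range_cycleGraph_embedding_compl (h : TwoPair G u v) (hn : 5 ≤ n)
    (f : cycleGraph n ↪g Gᶜ) (hu : u ∈ Set.range f) : v ∉ Set.range f := by
  obtain ⟨m, rfl⟩ : ∃ m, n = m + 2 := ⟨n - 2, by omega⟩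
  obtain ⟨a, rfl⟩ := hu
  rintro ⟨b, rfl⟩
  have hadj : (cycleGraph (m + 2)).Adj a b :=
    f.map_rel_iff.mp ((compl_adj _ _ _).mpr ⟨h.1, h.2.1⟩)
  obtain ⟨g, hg₀, hg⟩ := f.exists_cycleGraph_zero_last hadj
  have hpath : HasInducedPath Gᶜᶜ (g 0) (g (Fin.last (m + 1))) 3 :=
    (hasInducedPath_compl_cycleGraph (by omega)).map (Embedding.complEquiv g)
  rw [compl_compl, hg₀, hg] at hpath
  exact absurd (h.2.2 3 hpath) (by decide)

lemma notMem_range_cycleGraph_embedding_sup_edge (h : TwoPair G u v) (hn : 4 ≤ n)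
    (f : cycleGraph n ↪g G ⊔ edge u v) (hu : u ∈ Set.range f) : v ∉ Set.range f := by
  obtain ⟨m, rfl⟩ : ∃ m, n = m + 2 := ⟨n - 2, by omega⟩
  obtain ⟨a, ha⟩ := hu
  rintro ⟨b, hb⟩
  have hadj : (cycleGraph (m + 2)).Adj a b :=
    f.map_rel_iff.mp (by simp [ha, hb, edge_adj, h.1])
  obtain ⟨g, hg₀, hg⟩ := f.exists_cycleGraph_zero_last hadj
  rw [ha] at hg₀
  rw [hb] at hg
  have hpath : HasInducedPath ((G ⊔ edge u v) \ edge u v) (g 0) (g (Fin.last (m + 1))) (m + 1) :=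
    (hasInducedPath_cycleGraph_sdiff_edge (by omega)).map (g.sdiffEdge hg₀ hg)
  rw [sup_edge_sdiff_edge h.2.1, hg₀, hg] at hpath
  have := h.2.2 _ hpath
  omega

lemma notMem_range_cycleGraph_embedding_compl_sup_edge (h : TwoPair G u v)
    (hG : ∀ m, 5 ≤ m → ¬HasInducedCycle Gᶜ m) (hn : 5 ≤ n)
    (f : cycleGraph n ↪g (G ⊔ edge u v)ᶜ) (hu : u ∈ Set.range f) : v ∉ Set.range f := by
  have : NeZero n := ⟨by omega⟩
  obtain ⟨a, ha⟩ := hu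
  rintro ⟨b, hb⟩
  have hGc := compl_sup_edge_sup_edge h.1 h.2.1
  have hnadj : ¬(cycleGraph n).Adj a b := fun hadj =>
    ((compl_adj _ _ _).mp (f.map_rel_iff.mpr hadj)).2 (by simp [ha, hb, edge_adj, h.1])
  rw [cycleGraph_adj'] at hnadj
  have hsum := Fin.val_sub_add_val_sub fun hab : a = b => h.1 (ha.symm.trans (hab ▸ hb))
  have := (a - b).isLt
  have := (b - a).isLt
  -- the chord `uv` cuts off the hole `f a, f (a + 1), …, f b` of `Gᶜ`
  have arc_le {x y : V} {a b : Fin n} (hx : f a = x) (hy : f b = y) (hxy : edge x y = edge u v)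
      (hba : 2 ≤ (b - a).val) (hban : (b - a).val + 2 ≤ n) : (b - a).val ≤ 3 := by
    obtain ⟨g, -, -⟩ := f.exists_cycleGraph_sup_edge hx hy
    have hcyc := (hasInducedCycle_cycleGraph_sup_edge hba hban).map g
    rw [hxy, hGc] at hcyc
    by_contra! h4
    exact hG _ (by omega) hcyc
  have h₁ := arc_le ha hb rfl (by omega) (by omega)
  have h₂ := arc_le hb ha (edge_comm v u) (by omega) (by omega)
  obtain ⟨g, hg₀, hg⟩ := f.exists_cycleGraph_sup_edge ha hb
  obtain ⟨ℓ, hℓ, hpath⟩ := exists_hasInducedPath_compl_cycleGraph_sup_edge (c := b - a) hn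
    (by omega) h₁ (by omega)
  have hpath' : HasInducedPath ((G ⊔ edge u v)ᶜ ⊔ edge u v)ᶜ (g 0) (g (b - a)) ℓ :=
    hpath.map (Embedding.complEquiv g)
  rw [hg₀, hg, hGc, compl_compl] at hpath'
  exact hℓ (h.2.2 ℓ hpath')

end TwoPair

end

/-- If `{u,v}` is a two-pair of `G`, then `G + {u,v}` is weakly chordal iff `G`
is weakly chordal. -/
theorem add_twoPair_weaklyChordal_iff {V : Type*} (G : SimpleGraph V) (u v : V)
    (h : TwoPair G u v) :
    WeaklyChordal (G ⊔ SimpleGraph.edge u v) ↔ WeaklyChordal G := by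
  have hG (x y : V) (hxy : s(x, y) ≠ s(u, v)) : (G ⊔ edge u v).Adj x y ↔ G.Adj x y :=
    sup_edge_adj_of_ne hxy
  have hGc (x y : V) (hxy : s(x, y) ≠ s(u, v)) : (G ⊔ edge u v)ᶜ.Adj x y ↔ Gᶜ.Adj x y := by
    simp only [compl_adj, hG x y hxy]
  constructor
  · rintro ⟨h₁, h₂⟩
    exact ⟨fun n hn => not_hasInducedCycle_of_adj_iff hG
        (h.notMem_range_cycleGraph_embedding (by omega)) (h₁ n hn),
      fun n hn => not_hasInducedCycle_of_adj_iff hGc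
        (h.notMem_range_cycleGraph_embedding_compl hn) (h₂ n hn)⟩
  · rintro ⟨h₁, h₂⟩
    exact ⟨fun n hn => not_hasInducedCycle_of_adj_iff (fun x y hxy => (hG x y hxy).symm)
        (h.notMem_range_cycleGraph_embedding_sup_edge (by omega)) (h₁ n hn),
      fun n hn => not_hasInducedCycle_of_adj_iff (fun x y hxy => (hGc x y hxy).symm)
        (h.notMem_range_cycleGraph_embedding_compl_sup_edge h₂ hn) (h₂ n hn)⟩
end

section
/- If u and v are non-adjacent vertices of a graph G with a common neighbor, and every induced path between u and v has length exactly 2, then adding the edge uv creates no new induced cycle of length 5 or more in G. -/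
open SimpleGraph

/-!
If an induced cycle of `G + uv` passes through the new edge `uv`, deleting that edge leaves an
induced `u`–`v` path of `G` whose length is the cycle length minus one, hence at least 4, which
is excluded. Otherwise the cycle uses only edges of `G`, and since `G ≤ G + uv` it remains
induced in `G`.
-/

namespace SimpleGraph

variable {V W : Type*}

lemma adj_iff_sup_edge_adj_and_ne {G : SimpleGraph V} {u v : V} (huv : ¬G.Adj u v) (p q : V) :
    G.Adj p q ↔ (G ⊔ edge u v).Adj p q ∧ s(p, q) ≠ s(u, v) := by
  simp only [sup_adj, edge_adj, ne_eq, Sym2.eq_iff]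
  constructor
  · intro h
    refine ⟨Or.inl h, ?_⟩
    rintro (⟨rfl, rfl⟩ | ⟨rfl, rfl⟩)
    exacts [huv h, huv h.symm]
  · rintro ⟨h | ⟨huv', -⟩, hne⟩
    exacts [h, absurd huv' hne]

lemma Embedding.adj_iff_of_sup_edge {A : SimpleGraph W} {G : SimpleGraph V} {u v : V}
    (huv : ¬G.Adj u v) (f : A ↪g G ⊔ edge u v) {a b : W} (ha : f a = u) (hb : f b = v)
    (x y : W) : G.Adj (f x) (f y) ↔ A.Adj x y ∧ s(x, y) ≠ s(a, b) := by
  have hf : Sym2.map f s(x, y) = Sym2.map f s(a, b) ↔ s(x, y) = s(a, b) :=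
    (Sym2.map.injective f.injective).eq_iff
  rw [Sym2.map_mk, Sym2.map_mk, ha, hb] at hf
  rw [adj_iff_sup_edge_adj_and_ne huv, f.map_rel_iff, Ne, hf]

lemma cycleGraph_adj_iff_sub {n : ℕ} {x y : Fin (n + 1)} :
    (cycleGraph (n + 1)).Adj x y ↔ x ≠ y ∧ (x - y = 1 ∨ y - x = 1) := by
  simp [cycleGraph_eq_circulantGraph]

lemma cycleGraph_adj_add_left {n : ℕ} (a x y : Fin (n + 1)) :
    (cycleGraph (n + 1)).Adj (a + x) (a + y) ↔ (cycleGraph (n + 1)).Adj x y := by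
  simp only [cycleGraph_adj_iff_sub, add_sub_add_left_eq_sub, ne_eq, add_right_inj]

lemma cycleGraph_adj_sub_left {n : ℕ} (a x y : Fin (n + 1)) :
    (cycleGraph (n + 1)).Adj (a - x) (a - y) ↔ (cycleGraph (n + 1)).Adj x y := by
  simp only [cycleGraph_adj_iff_sub, sub_sub_sub_cancel_left, ne_eq, sub_right_inj]
  tauto

lemma exists_cycleGraph_iso_zero_last_of_adj {n : ℕ} {a b : Fin (n + 1)}
    (hab : (cycleGraph (n + 1)).Adj a b) :
    ∃ σ : cycleGraph (n + 1) ≃g cycleGraph (n + 1), σ 0 = a ∧ σ (Fin.last n) = b := by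
  have hlast : (Fin.last n : Fin (n + 1)) = -1 := by
    rw [Fin.ext_iff, Fin.val_last, Fin.coe_neg_one]
  rcases (cycleGraph_adj_iff_sub.mp hab).2 with h | h
  · refine ⟨⟨Equiv.addLeft a, cycleGraph_adj_add_left a _ _⟩, add_zero a, ?_⟩
    show a + Fin.last n = b
    rw [hlast, ← h]
    abel
  · refine ⟨⟨Equiv.subLeft a, cycleGraph_adj_sub_left a _ _⟩, sub_zero a, ?_⟩
    show a - Fin.last n = b
    rw [hlast, ← h]
    abel

lemma pathGraph_adj_iff_cycleGraph_adj {n : ℕ} (hn : 2 ≤ n) (x y : Fin (n + 1)) :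
    (pathGraph (n + 1)).Adj x y ↔ (cycleGraph (n + 1)).Adj x y ∧ s(x, y) ≠ s(0, Fin.last n) := by
  rw [pathGraph_adj, cycleGraph_adj', Ne, Sym2.eq_iff]
  simp only [Fin.ext_iff, Fin.val_zero, Fin.val_last]
  rcases lt_trichotomy x y with h | rfl | h
  · rw [Fin.coe_sub_iff_lt.mpr h, Fin.coe_sub_iff_le.mpr h.le]
    omega
  · simp
  · rw [Fin.coe_sub_iff_le.mpr h.le, Fin.coe_sub_iff_lt.mpr h]
    omega

lemma hasInducedPath_of_cycleGraph_embedding_sup_edge {G : SimpleGraph V} {u v : V}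
    (huv : ¬G.Adj u v) {ℓ : ℕ} (hℓ : 2 ≤ ℓ) (f : cycleGraph (ℓ + 1) ↪g G ⊔ edge u v)
    {a b : Fin (ℓ + 1)} (hab : (cycleGraph (ℓ + 1)).Adj a b) (ha : f a = u) (hb : f b = v) :
    HasInducedPath G u v ℓ := by
  obtain ⟨σ, hσ0, hσl⟩ := exists_cycleGraph_iso_zero_last_of_adj hab
  let g := f.comp σ.toEmbedding
  have hg0 : g 0 = u := by simp [g, hσ0, ha]
  have hgl : g (Fin.last ℓ) = v := by simp [g, hσl, hb]
  refine ⟨⟨g.toEmbedding, fun {x y} => ?_⟩, hg0, hgl⟩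
  rw [pathGraph_adj_iff_cycleGraph_adj hℓ, ← g.adj_iff_of_sup_edge huv hg0 hgl]
  rfl

end SimpleGraph

theorem add_edge_no_new_long_induced_cycle_general {V : Type*} (G : SimpleGraph V) (u v : V)
    (huv : ¬ G.Adj u v)
    (htp : ∀ ℓ, HasInducedPath G u v ℓ → ℓ = 2) :
    ∀ n, 5 ≤ n → ∀ f : SimpleGraph.cycleGraph n ↪g (G ⊔ SimpleGraph.edge u v),
      ∃ g : SimpleGraph.cycleGraph n ↪g G, ∀ i, g i = f i := by
  intro n hn f
  obtain ⟨ℓ, rfl⟩ : ∃ ℓ, n = ℓ + 1 := ⟨n - 1, by omega⟩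
  by_cases huses : ∃ a b, (cycleGraph (ℓ + 1)).Adj a b ∧ f a = u ∧ f b = v
  · obtain ⟨a, b, hab, ha, hb⟩ := huses
    have hℓ := htp ℓ (hasInducedPath_of_cycleGraph_embedding_sup_edge huv (by omega) f hab ha hb)
    omega
  push Not at huses
  refine ⟨⟨f.toEmbedding, fun {x y} => ?_⟩, fun _ => rfl⟩
  show G.Adj (f x) (f y) ↔ _
  rw [adj_iff_sup_edge_adj_and_ne huv, f.map_rel_iff, and_iff_left_iff_imp, Ne, Sym2.eq_iff]
  rintro hxy (⟨hx, hy⟩ | ⟨hx, hy⟩)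
  exacts [huses x y hxy hx hy, huses y x hxy.symm hy hx]

/-- If `u` and `v` are non-adjacent, have a common neighbor, and every induced
`u`–`v` path in `G` has length exactly 2, then every induced cycle of length 5
or more of `G + uv` is already an induced cycle of `G` (as the same cycle). -/
theorem add_edge_no_new_long_induced_cycle {V : Type*} (G : SimpleGraph V) (u v : V)
    (hne : u ≠ v) (huv : ¬ G.Adj u v)
    (hcn : (G.neighborSet u ∩ G.neighborSet v).Nonempty)
    (htp : ∀ ℓ, HasInducedPath G u v ℓ → ℓ = 2) :
    ∀ n, 5 ≤ n → ∀ f : SimpleGraph.cycleGraph n ↪g (G ⊔ SimpleGraph.edge u v),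
      ∃ g : SimpleGraph.cycleGraph n ↪g G, ∀ i, g i = f i :=
  add_edge_no_new_long_induced_cycle_general G u v huv htp
end

section
/- Let G be a graph and u, v non-adjacent vertices such that u and v lie in different connected components of G − I_{u,v}, where I_{u,v} = N(u) ∩ N(v) is nonempty. Then every induced path from u to v in G has exactly two edges (i.e., {u,v} is a two-pair). -/
open SimpleGraph

/-!
If an induced `u`–`v` path meets `I = N(u) ∩ N(v)`, the vertex it meets there is adjacent to
both ends of the path; since the path is induced, that vertex is its second vertex and also its
second to last, so the path has two edges. Otherwise the path lies in `G − I` and joins `u` to `v`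
there, contradicting the separation.
-/

namespace SimpleGraph

theorem Preconnected.reachable_induce_of_hom {V W : Type*} {G : SimpleGraph V}
    {H : SimpleGraph W} (hH : H.Preconnected) (f : H →g G) {s : Set V} (hs : ∀ w, f w ∈ s)
    (a b : W) : (G.induce s).Reachable ⟨f a, hs a⟩ ⟨f b, hs b⟩ :=
  (hH a b).map (G' := G.induce s) { toFun := fun w => ⟨f w, hs w⟩, map_rel' := f.map_adj }

theorem pathGraph_eq_two_of_adj_zero_of_adj_last {ℓ : ℕ} {i : Fin (ℓ + 1)}
    (h0 : (pathGraph (ℓ + 1)).Adj 0 i) (hl : (pathGraph (ℓ + 1)).Adj (Fin.last ℓ) i) :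
    ℓ = 2 := by
  simp only [pathGraph_adj, Fin.val_zero, Fin.val_last] at h0 hl
  omega

end SimpleGraph

theorem separated_twoPair_general {V : Type*} (G : SimpleGraph V) (u v : V)
    (hsep : ¬ (G.induce ((G.neighborSet u ∩ G.neighborSet v)ᶜ)).Reachable
      ⟨u, fun h => G.irrefl h.1⟩ ⟨v, fun h => G.irrefl h.2⟩) :
    ∀ ℓ, HasInducedPath G u v ℓ → ℓ = 2 := by
  rintro ℓ ⟨f, rfl, rfl⟩
  by_cases hmeet : ∃ i, f i ∈ G.neighborSet (f 0) ∩ G.neighborSet (f (Fin.last ℓ))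
  · obtain ⟨i, h0, hl⟩ := hmeet
    exact pathGraph_eq_two_of_adj_zero_of_adj_last (f.map_adj_iff.mp h0) (f.map_adj_iff.mp hl)
  · push Not at hmeet
    exact absurd ((pathGraph_preconnected (ℓ + 1)).reachable_induce_of_hom f.toHom hmeet 0
      (Fin.last ℓ)) hsep

/-- If `u` and `v` are non-adjacent, their common neighborhood
`I = N(u) ∩ N(v)` is nonempty, and removing `I` leaves `u` and `v` in different
components, then every induced `u`–`v` path of `G` has exactly two edges,
i.e. `{u,v}` is a two-pair. -/
theorem separated_twoPair {V : Type*} (G : SimpleGraph V) (u v : V)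
    (hne : u ≠ v) (huv : ¬ G.Adj u v)
    (hI : (G.neighborSet u ∩ G.neighborSet v).Nonempty)
    (hsep : ¬ (G.induce ((G.neighborSet u ∩ G.neighborSet v)ᶜ)).Reachable
      ⟨u, fun h => G.irrefl h.1⟩ ⟨v, fun h => G.irrefl h.2⟩) :
    ∀ ℓ, HasInducedPath G u v ℓ → ℓ = 2 :=
  separated_twoPair_general G u v hsep
end
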